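/- Suppose R is a regular resolution refutation of an unsatisfiable CNF formula φ of size s. Then there is a read-once branching program of size s solving the conflict clause search problem for φ: every full assignment is routed to a leaf labeled with a clause of φ it falsifies. Moreover, if R is an ordered resolution refutation (the resolution variables along every path respect a single total order), the branching program is an OBDD. -/

import Mathlib

/-- A clause: a finite set of literals, a literal being a variable (in ℕ) with a polarity. -/
abbrev Clause := Finset (ℕ × Bool)

/-- A CNF formula: a finite set of clauses. -/
abbrev CNF := Finset Clause

/-- An assignment falsifies a clause if it makes every literal in it false. -/
def Falsifies (σ : ℕ → Bool) (C : Clause) : Prop := ∀ l ∈ C, σ l.1 ≠ l.2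

/-- A CNF formula is unsatisfiable if every assignment falsifies some clause. -/
def Unsat (φ : CNF) : Prop := ∀ σ : ℕ → Bool, ∃ C ∈ φ, Falsifies σ C

/-- A branching program of size `s`: a DAG (nodes topologically indexed by `Fin s`)
with a unique source; each internal node queries a variable and has a 0- and a 1-edge;
each leaf is labeled by a clause. -/
structure BranchingProgram (s : ℕ) where
  source : Fin s
  isLeaf : Fin s → Bool
  leafClause : Fin s → Clause
  var : Fin s → ℕ
  next : Fin s → Bool → Fin s
  acyclic : ∀ v b, isLeaf v = false → v < next v b

namespace BranchingProgram

variable {s : ℕ} (B : BranchingProgram s)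

/-- One step of computation on assignment `σ` (leaves are fixed points). -/
def step (σ : ℕ → Bool) (v : Fin s) : Fin s :=
  if B.isLeaf v then v else B.next v (σ (B.var v))

/-- The leaf reached by following `σ` from the source. -/
def run (σ : ℕ → Bool) : Fin s := (B.step σ)^[s] B.source

/-- `l` is a path in the DAG starting at the source. -/
def IsSourcePath (l : List (Fin s)) : Prop :=
  l.head? = some B.source ∧
    List.Chain' (fun u v => B.isLeaf u = false ∧ ∃ b, v = B.next u b) l

/-- Read-once: no variable is queried twice along any source-to-leaf path. -/
def ReadOnce : Prop :=
  ∀ l : List (Fin s), B.IsSourcePath l →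
    ((l.filter (fun v => !B.isLeaf v)).map B.var).Nodup

/-- An OBDD: the variables queried along every path are consistent with a
single total order of the variables. -/
def IsOBDD : Prop :=
  ∃ ord : ℕ → ℕ, Function.Injective ord ∧
    ∀ l : List (Fin s), B.IsSourcePath l →
      ((l.filter (fun v => !B.isLeaf v)).map (fun v => ord (B.var v))).Pairwise (· < ·)

/-- `B` solves the conflict clause search problem for `φ`: every assignment is routed
to a leaf labeled by a clause of `φ` that it falsifies. -/
def SolvesSearch (φ : CNF) : Prop :=
  ∀ σ : ℕ → Bool,
    B.isLeaf (B.run σ) = true ∧ B.leafClause (B.run σ) ∈ φ ∧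
      Falsifies σ (B.leafClause (B.run σ))

end BranchingProgram

/-- A resolution refutation of `φ`, as a DAG of clauses (topologically indexed):
each line is an axiom (clause of `φ`) or is obtained by resolving two earlier
lines on a variable, and some line is the empty clause. -/
structure ResRefutation (φ : CNF) where
  size : ℕ
  clause : Fin size → Clause
  isAx : Fin size → Bool
  prem1 : Fin size → Fin size
  prem2 : Fin size → Fin size
  resVar : Fin size → ℕ
  ax_mem : ∀ i, isAx i = true → clause i ∈ φ
  prem1_lt : ∀ i, isAx i = false → prem1 i < i
  prem2_lt : ∀ i, isAx i = false → prem2 i < i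
  res_pos : ∀ i, isAx i = false → (resVar i, true) ∈ clause (prem1 i)
  res_neg : ∀ i, isAx i = false → (resVar i, false) ∈ clause (prem2 i)
  res_eq : ∀ i, isAx i = false →
    clause i =
      (clause (prem1 i)).erase (resVar i, true) ∪ (clause (prem2 i)).erase (resVar i, false)
  refutes : ∃ i, clause i = ∅

namespace ResRefutation

variable {φ : CNF} (R : ResRefutation φ)

/-- `l` is a path in the proof DAG (from a clause towards the axioms used to derive it). -/
def IsPath (l : List (Fin R.size)) : Prop :=
  List.Chain' (fun u v => R.isAx u = false ∧ (v = R.prem1 u ∨ v = R.prem2 u)) l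

/-- Regular: no variable is resolved on more than once along any path of the proof DAG. -/
def Regular : Prop :=
  ∀ l : List (Fin R.size), R.IsPath l →
    ((l.filter (fun v => !R.isAx v)).map R.resVar).Nodup

/-- Ordered: the resolved variables along every path of the proof DAG are consistent
with a single total order of the variables. -/
def Ordered : Prop :=
  ∃ ord : ℕ → ℕ, Function.Injective ord ∧
    ∀ l : List (Fin R.size), R.IsPath l →
      ((l.filter (fun v => !R.isAx v)).map (fun v => ord (R.resVar v))).Pairwise (· < ·)

end ResRefutation

/-!
Reverse the proof DAG: line `i` becomes node `i.rev`, and a resolution step on `x` becomes a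
query of `x` whose `0`-edge leads to the premise containing the literal `x` and whose `1`-edge
to the premise containing `¬x`. If an assignment falsifies the resolvent, it falsifies the
premise it is sent to, so starting from the empty clause every assignment reaches an axiom it
falsifies. Paths of the program are reversed paths of the refutation, hence inherit
regularity and orderedness.
-/

namespace BranchingProgram

variable {s : ℕ} (B : BranchingProgram s)

theorem step_of_isLeaf {σ : ℕ → Bool} {v : Fin s} (h : B.isLeaf v = true) :
    B.step σ v = v :=
  if_pos h

theorem step_of_not_isLeaf {σ : ℕ → Bool} {v : Fin s} (h : B.isLeaf v = false) :
    B.step σ v = B.next v (σ (B.var v)) :=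
  if_neg (by simp [h])

theorem isLeaf_iterate_step_or_le (σ : ℕ → Bool) (v : Fin s) (n : ℕ) :
    B.isLeaf ((B.step σ)^[n] v) = true ∨ n ≤ ((B.step σ)^[n] v).val := by
  induction n with
  | zero => exact Or.inr (Nat.zero_le _)
  | succ n ih =>
    rw [Function.iterate_succ_apply']
    cases hleaf : B.isLeaf ((B.step σ)^[n] v)
    · have hlt := B.acyclic _ (σ (B.var ((B.step σ)^[n] v))) hleaf
      have hle := ih.resolve_left (by simp [hleaf])
      rw [B.step_of_not_isLeaf hleaf]
      exact Or.inr (by rw [Fin.lt_def] at hlt; omega)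
    · exact Or.inl (by rwa [B.step_of_isLeaf hleaf])

theorem isLeaf_run (σ : ℕ → Bool) : B.isLeaf (B.run σ) = true :=
  (B.isLeaf_iterate_step_or_le σ B.source s).resolve_right (Nat.not_le.mpr (Fin.is_lt _))

end BranchingProgram

namespace ResRefutation

variable {φ : CNF} (R : ResRefutation φ)

theorem falsifies_prem {σ : ℕ → Bool} {i : Fin R.size} (hi : R.isAx i = false)
    (h : Falsifies σ (R.clause i)) :
    Falsifies σ (R.clause (if σ (R.resVar i) then R.prem2 i else R.prem1 i)) := by
  cases hx : σ (R.resVar i) <;> intro l hl <;>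
    simp only [Bool.false_eq_true, if_false, if_true] at hl
  · by_cases hlx : l = (R.resVar i, true)
    · simp [hlx, hx]
    · refine h l ?_
      rw [R.res_eq i hi]
      exact Finset.mem_union_left _ (Finset.mem_erase.mpr ⟨hlx, hl⟩)
  · by_cases hlx : l = (R.resVar i, false)
    · simp [hlx, hx]
    · refine h l ?_
      rw [R.res_eq i hi]
      exact Finset.mem_union_right _ (Finset.mem_erase.mpr ⟨hlx, hl⟩)

def toBranchingProgram (root : Fin R.size) : BranchingProgram R.size where
  source := root.rev
  isLeaf v := R.isAx v.rev
  leafClause v := R.clause v.rev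
  var v := R.resVar v.rev
  next v b := (if b then R.prem2 v.rev else R.prem1 v.rev).rev
  acyclic v b h := by
    rw [Fin.lt_rev_iff]
    cases b
    · exact R.prem1_lt _ h
    · exact R.prem2_lt _ h

theorem falsifies_leafClause_step {σ : ℕ → Bool} {root v : Fin R.size}
    (h : Falsifies σ ((R.toBranchingProgram root).leafClause v)) :
    Falsifies σ ((R.toBranchingProgram root).leafClause
      ((R.toBranchingProgram root).step σ v)) := by
  cases hleaf : (R.toBranchingProgram root).isLeaf v
  · rw [BranchingProgram.step_of_not_isLeaf _ hleaf]
    simpa [toBranchingProgram] using R.falsifies_prem hleaf h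
  · rwa [BranchingProgram.step_of_isLeaf _ hleaf]

theorem solvesSearch_toBranchingProgram {root : Fin R.size} (hroot : R.clause root = ∅) :
    (R.toBranchingProgram root).SolvesSearch φ := by
  intro σ
  have hleaf := (R.toBranchingProgram root).isLeaf_run σ
  refine ⟨hleaf, R.ax_mem _ hleaf, ?_⟩
  refine Function.Iterate.rec (fun v => Falsifies σ ((R.toBranchingProgram root).leafClause v))
    ?_ (fun _ => R.falsifies_leafClause_step) R.size
  simp [toBranchingProgram, hroot, Falsifies]

theorem isPath_map_rev {root : Fin R.size} {l : List (Fin R.size)}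
    (hl : (R.toBranchingProgram root).IsSourcePath l) : R.IsPath (l.map Fin.rev) := by
  rw [IsPath, List.Chain', List.isChain_map]
  refine hl.2.imp ?_
  rintro u v ⟨hax, b, rfl⟩
  refine ⟨hax, ?_⟩
  cases b
  · exact Or.inl (Fin.rev_rev _)
  · exact Or.inr (Fin.rev_rev _)

theorem filter_map_rev (root : Fin R.size) (l : List (Fin R.size)) :
    (l.map Fin.rev).filter (fun v => !R.isAx v) =
      (l.filter (fun v => !(R.toBranchingProgram root).isLeaf v)).map Fin.rev :=
  List.filter_map ..

theorem readOnce_toBranchingProgram (hreg : R.Regular) (root : Fin R.size) :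
    (R.toBranchingProgram root).ReadOnce := fun l hl => by
  have h := hreg _ (R.isPath_map_rev hl)
  rwa [R.filter_map_rev root, List.map_map] at h

theorem isOBDD_toBranchingProgram (hord : R.Ordered) (root : Fin R.size) :
    (R.toBranchingProgram root).IsOBDD := by
  obtain ⟨ord, hinj, hpath⟩ := hord
  refine ⟨ord, hinj, fun l hl => ?_⟩
  have h := hpath _ (R.isPath_map_rev hl)
  rwa [R.filter_map_rev root, List.map_map] at h

end ResRefutation

theorem regular_resolution_to_readonce_bp_general (φ : CNF)
    (R : ResRefutation φ) (hreg : R.Regular) :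
    ∃ B : BranchingProgram R.size, B.ReadOnce ∧ B.SolvesSearch φ ∧
      (R.Ordered → B.IsOBDD) := by
  obtain ⟨root, hroot⟩ := R.refutes
  exact ⟨R.toBranchingProgram root, R.readOnce_toBranchingProgram hreg root,
    R.solvesSearch_toBranchingProgram hroot, fun hord => R.isOBDD_toBranchingProgram hord root⟩

/-- From a regular resolution refutation of an unsatisfiable CNF `φ` of size `s`, one gets a
read-once branching program of size `s` solving the conflict clause search problem for `φ`;
moreover if the refutation is ordered, the branching program is an OBDD. -/
theorem regular_resolution_to_readonce_bp (φ : CNF) (hφ : Unsat φ)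
    (R : ResRefutation φ) (hreg : R.Regular) :
    ∃ B : BranchingProgram R.size, B.ReadOnce ∧ B.SolvesSearch φ ∧
      (R.Ordered → B.IsOBDD) :=
  regular_resolution_to_readonce_bp_general φ R hreg
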